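/- Let 0 < p < 1/2, 0 < α < v(p) and m ≥ 1, and let B be the event that min X^N_i < (v(p) − α)·i for all 1 ≤ i ≤ m. Then for every N ≥ 1, the asymptotic speed satisfies v_N(p) ≥ (v(p) − α)·(1 − m·P(B)). -/

import Mathlib

open MeasureTheory ProbabilityTheory Filter

noncomputable section

/-- The random walk step distribution `p·δ₁ + (1−p)·δ₀` on `ℤ`. -/
def bernoulliStep (p : ℝ) : Measure ℤ :=
  ENNReal.ofReal p • Measure.dirac 1 + ENNReal.ofReal (1 - p) • Measure.dirac 0

/-- One branching-selection step: each of the `N` particles at positions `x i` branches into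
two particles, displaced by `y i 0` and `y i 1` respectively; of the `2N` resulting particles
only the `N` rightmost are kept, listed in decreasing order. -/
def nextPop (N : ℕ) (x : Fin N → ℤ) (y : Fin N → Fin 2 → ℤ) : Fin N → ℤ :=
  fun i =>
    (((Finset.univ.val.map fun q : Fin N × Fin 2 => x q.1 + y q.1 q.2).sort (· ≥ ·)).getD i 0)

variable {Ω : Type*}

/-- The branching-selection particle system with `N` particles driven by the noise family `Y`
(`Y n i ℓ` is the displacement of the `ℓ`-th offspring of the `i`-th particle at time `n`),
started from `N` particles at the origin. -/
def chain (N : ℕ) (Y : ℕ → ℕ → Fin 2 → Ω → ℤ) : ℕ → Ω → Fin N → ℤ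
  | 0 => fun _ _ => 0
  | n + 1 => fun ω => nextPop N (chain N Y n ω) fun i ℓ => Y n i.val ℓ ω

/-- Maximal position in a population. -/
def maxPop {N : ℕ} (x : Fin N → ℤ) : ℤ :=
  ((Finset.univ.val.map x).sort (· ≤ ·)).getLastD 0

/-- Minimal position in a population. -/
def minPop {N : ℕ} (x : Fin N → ℤ) : ℤ :=
  ((Finset.univ.val.map x).sort (· ≤ ·)).headD 0

/-- The large deviations rate function `Λ` for sums of i.i.d. Bernoulli(`p`) variables. -/
def rateFn (p x : ℝ) : ℝ :=
  x * Real.log (x / p) + (1 - x) * Real.log ((1 - x) / (1 - p))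

/-!
Write `r = v(p) - α` and call a time `t` bad if the event `B` occurs for the system restarted at
time `t` from `N` particles at the origin. The selection step is monotone and commutes with
translations, so the restarted system, shifted by `min X_t`, stays below `X_{t + ·}`: the minimum
is superadditive along restarts. From a time that is not bad the minimum gains `r * i` within some
`i ≤ m` steps, and a bad time costs at most `m` steps of progress, so
`min X_n ≥ r n - r m - r m · #{bad t < n}`. Since the noise is i.i.d., every time is bad with
probability `P(B)`; taking expectations, dividing by `n` and using dominated convergence
(`0 ≤ max X_n ≤ n`) gives `v_N ≥ r (1 - m P(B))`.
-/

open Finset Topology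

theorem renewal_lower_bound {a : ℕ → ℝ} {B : Set ℕ} {m : ℕ} {r : ℝ} (hm : 1 ≤ m) (hr : 0 ≤ r)
    (ha : Monotone a) (hgain : ∀ t ∉ B, ∃ i ∈ Icc 1 m, a t + r * i ≤ a (t + i)) (d t : ℕ) :
    a t + r * d - r * m - r * m * ∑ s ∈ Ico t (t + d), B.indicator 1 s ≤ a (t + d) := by
  induction d using Nat.strong_induction_on generalizing t with
  | _ d ih =>
  have hcount_nonneg : ∀ u v, 0 ≤ ∑ s ∈ Ico u v, B.indicator (1 : ℕ → ℝ) s :=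
    fun _ _ => sum_nonneg fun s _ => Set.indicator_nonneg (fun _ _ => zero_le_one) s
  have hsplit : ∀ i ≤ d, ∑ s ∈ Ico t (t + d), B.indicator (1 : ℕ → ℝ) s =
      ∑ s ∈ Ico t (t + i), B.indicator 1 s + ∑ s ∈ Ico (t + i) (t + d), B.indicator 1 s :=
    fun i hi => (sum_Ico_consecutive _ (by omega) (by omega)).symm
  have hrm : 0 ≤ r * m := by positivity
  rcases le_or_gt d m with hdm | hmd
  · have : r * d ≤ r * m := by gcongr
    have := ha (Nat.le_add_right t d)
    have := mul_nonneg hrm (hcount_nonneg t (t + d))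
    linarith
  · by_cases htB : t ∈ B
    · have ih' := ih (d - m) (by omega) (t + m)
      have hone : 1 ≤ ∑ s ∈ Ico t (t + m), B.indicator (1 : ℕ → ℝ) s :=
        calc (1 : ℝ) = B.indicator 1 t := by simp [htB]
          _ ≤ _ := single_le_sum (fun s _ => Set.indicator_nonneg (fun _ _ => zero_le_one) s)
            (by simp; omega)
      rw [hsplit m hmd.le]
      rw [show t + m + (d - m) = t + d by omega, Nat.cast_sub hmd.le] at ih'
      have := ha (Nat.le_add_right t m)
      have := mul_le_mul_of_nonneg_left hone hrm
      linarith
    · obtain ⟨i, hi, hgain_t⟩ := hgain t htB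
      rw [mem_Icc] at hi
      have ih' := ih (d - i) (by omega) (t + i)
      rw [hsplit i (by omega)]
      rw [show t + i + (d - i) = t + d by omega, Nat.cast_sub (by omega : i ≤ d)] at ih'
      have := mul_nonneg hrm (hcount_nonneg t (t + i))
      linarith

theorem List.Pairwise.le_getElem_iff_lt_countP {α : Type*} [LinearOrder α] {l : List α}
    (hl : l.Pairwise (· ≥ ·)) {i : ℕ} (hi : i < l.length) (t : α) :
    t ≤ l[i] ↔ i < l.countP (fun a => t ≤ a) := by
  induction l generalizing i with
  | nil => simp at hi
  | cons a l ih =>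
    rw [List.pairwise_cons] at hl
    have hcount : ¬ t ≤ a → l.countP (fun b => t ≤ b) = 0 := fun hta =>
      List.countP_eq_zero.2 fun b hb htb => hta ((of_decide_eq_true htb).trans (hl.1 b hb))
    rw [List.countP_cons]
    cases i with
    | zero =>
      by_cases hta : t ≤ a <;> simp [hta, hcount]
    | succ i =>
      rw [List.getElem_cons_succ, ih hl.2 (by simpa using hi)]
      by_cases hta : t ≤ a
      · simp [hta]
      · simp [hta, hcount hta]

variable {N : ℕ}

theorem le_nextPop_iff (x : Fin N → ℤ) (y : Fin N → Fin 2 → ℤ) (i : Fin N) (t : ℤ) :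
    t ≤ nextPop N x y i ↔ (i : ℕ) < #{q : Fin N × Fin 2 | t ≤ x q.1 + y q.1 q.2} := by
  have hi : (i : ℕ) < ((univ.val.map fun q : Fin N × Fin 2 => x q.1 + y q.1 q.2).sort
      (· ≥ ·)).length := by
    simp only [Multiset.length_sort, Multiset.card_map, card_val, card_univ, Fintype.card_prod,
      Fintype.card_fin]
    omega
  rw [nextPop, List.getD_eq_getElem _ _ hi,
    (Multiset.pairwise_sort _ _).le_getElem_iff_lt_countP hi, ← Multiset.coe_countP,
    Multiset.sort_eq, Multiset.countP_map]
  rfl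

theorem nextPop_add_le_nextPop {x x' : Fin N → ℤ} {c : ℤ} (h : ∀ j, x j + c ≤ x' j)
    (y : Fin N → Fin 2 → ℤ) (i : Fin N) : nextPop N x y i + c ≤ nextPop N x' y i := by
  rw [le_nextPop_iff]
  refine ((le_nextPop_iff x y i _).1 le_rfl).trans_le (card_le_card fun q => ?_)
  simp only [mem_filter, mem_univ, true_and]
  have := h q.1
  omega

theorem le_nextPop {x : Fin N → ℤ} {y : Fin N → Fin 2 → ℤ} {t : ℤ}
    (h : ∀ q : Fin N × Fin 2, t ≤ x q.1 + y q.1 q.2) (i : Fin N) : t ≤ nextPop N x y i := by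
  rw [le_nextPop_iff, filter_true_of_mem fun q _ => h q, card_univ, Fintype.card_prod,
    Fintype.card_fin, Fintype.card_fin]
  omega

theorem nextPop_le {x : Fin N → ℤ} {y : Fin N → Fin 2 → ℤ} {t : ℤ}
    (h : ∀ q : Fin N × Fin 2, x q.1 + y q.1 q.2 ≤ t) (i : Fin N) : nextPop N x y i ≤ t := by
  by_contra! hlt
  have := (le_nextPop_iff x y i (t + 1)).1 hlt
  rw [filter_false_of_mem fun q _ => by have := h q; omega] at this
  simp at this

theorem sort_map_ne_nil [NeZero N] (x : Fin N → ℤ) : (univ.val.map x).sort (· ≤ ·) ≠ [] := by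
  rw [← List.length_pos_iff, Multiset.length_sort]
  simp [Nat.pos_of_neZero]

theorem minPop_eq_inf' [NeZero N] (x : Fin N → ℤ) : minPop x = univ.inf' univ_nonempty x := by
  obtain ⟨b, l, hbl⟩ := List.exists_cons_of_ne_nil (sort_map_ne_nil x)
  have hmem : ∀ a, a ∈ b :: l ↔ ∃ j, x j = a := by simp [← hbl]
  have hsorted := Multiset.pairwise_sort (univ.val.map x) (· ≤ ·)
  rw [hbl, List.pairwise_cons] at hsorted
  rw [minPop, hbl, List.headD_cons]
  obtain ⟨j, rfl⟩ := (hmem b).1 List.mem_cons_self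
  refine le_antisymm (le_inf' _ _ fun k _ => ?_) (inf'_le _ (mem_univ j))
  rcases List.mem_cons.1 ((hmem (x k)).2 ⟨k, rfl⟩) with h | h
  · exact h.ge
  · exact hsorted.1 _ h

theorem maxPop_eq_sup' [NeZero N] (x : Fin N → ℤ) : maxPop x = univ.sup' univ_nonempty x := by
  obtain ⟨l, b, hlb⟩ := (List.eq_nil_or_concat _).resolve_left (sort_map_ne_nil x)
  rw [List.concat_eq_append] at hlb
  have hmem : ∀ a, a ∈ l ++ [b] ↔ ∃ j, x j = a := by simp [← hlb]
  have hsorted := Multiset.pairwise_sort (univ.val.map x) (· ≤ ·)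
  rw [hlb, List.pairwise_append] at hsorted
  rw [maxPop, hlb, List.getLastD_concat]
  obtain ⟨j, rfl⟩ := (hmem b).1 (by simp)
  refine le_antisymm (le_sup' _ (mem_univ j)) (sup'_le _ _ fun k _ => ?_)
  rcases List.mem_append.1 ((hmem (x k)).2 ⟨k, rfl⟩) with h | h
  · exact hsorted.2.2 _ h _ (by simp)
  · exact (List.mem_singleton.1 h).le

theorem minPop_le_maxPop [NeZero N] (x : Fin N → ℤ) : minPop x ≤ maxPop x := by
  rw [minPop_eq_inf', maxPop_eq_sup']
  exact (inf'_le _ (mem_univ 0)).trans (le_sup' _ (mem_univ 0))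

/-- The event `B` of the statement for the system driven by `Y`, with slope `r = v(p) - α`. -/
def slowStartEvent (N m : ℕ) (r : ℝ) (Y : ℕ → ℕ → Fin 2 → Ω → ℤ) : Set Ω :=
  {ω | ∀ i : ℕ, 1 ≤ i → i ≤ m → (minPop (chain N Y i ω) : ℝ) < r * i}

section Chain

variable {Y : ℕ → ℕ → Fin 2 → Ω → ℤ} {ω : Ω}

theorem chain_congr {Ω' : Type*} {Y' : ℕ → ℕ → Fin 2 → Ω' → ℤ} {ω' : Ω'} {n : ℕ}
    (h : ∀ k < n, ∀ (i : Fin N) l, Y k i l ω = Y' k i l ω') :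
    chain N Y n ω = chain N Y' n ω' := by
  induction n with
  | zero => rfl
  | succ n ih => simp only [chain, ih fun k hk => h k (by omega), h n (by omega)]

variable [NeZero N]

theorem minPop_chain_zero : minPop (chain N Y 0 ω) = 0 := by
  simp [chain, minPop_eq_inf']

theorem monotone_minPop_chain (h0 : ∀ n i l, 0 ≤ Y n i l ω) :
    Monotone fun n => minPop (chain N Y n ω) := by
  refine monotone_nat_of_le_succ fun n => ?_
  simp only [minPop_eq_inf']
  exact le_inf' _ _ fun j _ => le_nextPop (x := chain N Y n ω) (y := fun i l => Y n i l ω) (fun q =>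
    (inf'_le _ (mem_univ q.1)).trans (le_add_of_nonneg_right (h0 _ _ _))) j

theorem maxPop_chain_le (h1 : ∀ n i l, Y n i l ω ≤ 1) (n : ℕ) :
    maxPop (chain N Y n ω) ≤ n := by
  induction n with
  | zero => simp [chain, maxPop_eq_sup']
  | succ n ih =>
    rw [maxPop_eq_sup'] at ih ⊢
    refine sup'_le _ _ fun j _ =>
      nextPop_le (x := chain N Y n ω) (y := fun i l => Y n i l ω) (fun q => ?_) j
    have := (le_sup' (chain N Y n ω) (mem_univ q.1)).trans ih
    have := h1 n q.1 q.2
    push_cast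
    omega

theorem minPop_add_chain_le (t n : ℕ) (j : Fin N) :
    minPop (chain N Y t ω) + chain N (fun k => Y (t + k)) n ω j ≤ chain N Y (t + n) ω j := by
  induction n generalizing j with
  | zero =>
    rw [minPop_eq_inf']
    simpa only [chain, add_zero] using inf'_le (chain N Y t ω) (mem_univ j)
  | succ n ih =>
    rw [← add_assoc]
    simp only [chain]
    exact (add_comm _ _).trans_le
      (nextPop_add_le_nextPop (fun i => (add_comm _ _).trans_le (ih i)) _ j)

theorem minPop_add_minPop_chain_le (t n : ℕ) :
    minPop (chain N Y t ω) + minPop (chain N (fun k => Y (t + k)) n ω)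
      ≤ minPop (chain N Y (t + n) ω) := by
  conv_rhs => rw [minPop_eq_inf']
  refine le_inf' _ _ fun j _ => le_trans ?_ (minPop_add_chain_le t n j)
  rw [minPop_eq_inf' (chain N _ n ω)]
  gcongr
  exact inf'_le _ (mem_univ j)

theorem maxPop_chain_nonneg (h0 : ∀ n i l, 0 ≤ Y n i l ω) (n : ℕ) :
    0 ≤ maxPop (chain N Y n ω) :=
  minPop_chain_zero.symm.le.trans
    ((monotone_minPop_chain h0 (Nat.zero_le n)).trans (minPop_le_maxPop _))

theorem abs_maxPop_chain_le (h0 : ∀ n i l, 0 ≤ Y n i l ω) (h1 : ∀ n i l, Y n i l ω ≤ 1)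
    (n : ℕ) : |(maxPop (chain N Y n ω) : ℝ)| ≤ n := by
  rw [abs_of_nonneg (by exact_mod_cast maxPop_chain_nonneg h0 n)]
  exact_mod_cast maxPop_chain_le h1 n

theorem sub_le_minPop_chain {m : ℕ} {r : ℝ} (hm : 1 ≤ m) (hr : 0 ≤ r)
    (h0 : ∀ n i l, 0 ≤ Y n i l ω) (n : ℕ) :
    r * n - r * m - r * m * ∑ t ∈ range n, (slowStartEvent N m r fun k => Y (t + k)).indicator 1 ω
      ≤ minPop (chain N Y n ω) := by
  have hgain : ∀ t ∉ {t | ω ∈ slowStartEvent N m r fun k => Y (t + k)}, ∃ i ∈ Icc 1 m,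
      (minPop (chain N Y t ω) : ℝ) + r * i ≤ minPop (chain N Y (t + i) ω) := by
    intro t ht
    simp only [slowStartEvent, Set.mem_ofPred_eq, not_forall, not_lt] at ht
    obtain ⟨i, hi1, him, hri⟩ := ht
    refine ⟨i, mem_Icc.2 ⟨hi1, him⟩, ?_⟩
    have := minPop_add_minPop_chain_le (N := N) (Y := Y) (ω := ω) t i
    have : ((minPop (chain N Y t ω) + minPop (chain N (fun k => Y (t + k)) i ω) : ℤ) : ℝ)
        ≤ minPop (chain N Y (t + i) ω) := by exact_mod_cast this
    push_cast at this
    linarith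
  have := renewal_lower_bound hm hr (Int.cast_mono.comp (monotone_minPop_chain h0)) hgain n 0
  simp only [Function.comp_apply, zero_add, minPop_chain_zero, Int.cast_zero,
    ← range_eq_Ico] at this
  exact this

end Chain

theorem bernoulliStep_ne_zero (p : ℝ) : bernoulliStep p ≠ 0 := by
  intro h
  have h1 := congrArg (· {1}) h
  have h0 := congrArg (· {0}) h
  simp [bernoulliStep] at h0 h1
  linarith

theorem ae_bernoulliStep (p : ℝ) : ∀ᵐ z ∂bernoulliStep p, 0 ≤ z ∧ z ≤ 1 := by
  simp only [bernoulliStep, ae_add_measure_iff]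
  exact ⟨Measure.ae_smul_measure (by simp) _, Measure.ae_smul_measure (by simp) _⟩

def noiseWindow (N m : ℕ) (Y : ℕ → ℕ → Fin 2 → Ω → ℤ) (ω : Ω) : Fin m × Fin N × Fin 2 → ℤ :=
  fun q => Y q.1 q.2.1 q.2.2 ω

/-- The identity noise on the window space, extended by `0` outside the window; it exhibits
`slowStartEvent` as a preimage under `noiseWindow`. -/
def extendWindow (N m : ℕ) : ℕ → ℕ → Fin 2 → (Fin m × Fin N × Fin 2 → ℤ) → ℤ :=
  fun k i l v => if h : k < m ∧ i < N then v (⟨k, h.1⟩, ⟨i, h.2⟩, l) else 0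

theorem slowStartEvent_eq_preimage (m : ℕ) (r : ℝ) (Y : ℕ → ℕ → Fin 2 → Ω → ℤ) :
    slowStartEvent N m r Y = noiseWindow N m Y ⁻¹' slowStartEvent N m r (extendWindow N m) := by
  ext ω
  simp only [slowStartEvent, Set.mem_preimage, Set.mem_ofPred_eq]
  refine forall_congr' fun i => imp_congr_right fun _ => forall_congr' fun him => ?_
  rw [chain_congr (Y' := extendWindow N m) (ω' := noiseWindow N m Y ω) fun k hk j l => ?_]
  simp [extendWindow, noiseWindow, show k < m by omega]

theorem aemeasurable_chain [MeasurableSpace Ω] {μ : Measure Ω} {Y : ℕ → ℕ → Fin 2 → Ω → ℤ}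
    (hY : ∀ n i l, AEMeasurable (Y n i l) μ) (n : ℕ) : AEMeasurable (chain N Y n) μ := by
  induction n with
  | zero => exact aemeasurable_const
  | succ n ih =>
    have hnoise : AEMeasurable (fun ω (i : Fin N) (l : Fin 2) => Y n i l ω) μ :=
      aemeasurable_pi_lambda _ fun i => aemeasurable_pi_lambda _ fun l => hY n i l
    have hstep : chain N Y (n + 1) =
        Function.uncurry (nextPop N) ∘ fun ω => (chain N Y n ω, fun i l => Y n i l ω) := by
      funext ω
      simp only [chain, Function.comp_apply, Function.uncurry_apply_pair]
    rw [hstep]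
    exact (measurable_of_countable _).comp_aemeasurable (ih.prodMk hnoise)

section Stationarity

variable [MeasurableSpace Ω] {μ : Measure Ω} [IsProbabilityMeasure μ] {Y : ℕ → ℕ → Fin 2 → Ω → ℤ}
  {ν : Measure ℤ} (hY : ∀ n i l, AEMeasurable (Y n i l) μ)
  (hind : iIndepFun (fun q : ℕ × ℕ × Fin 2 => Y q.1 q.2.1 q.2.2) μ)
  (hlaw : ∀ q : ℕ × ℕ × Fin 2, μ.map (Y q.1 q.2.1 q.2.2) = ν)

include hY hind hlaw in
theorem map_noiseWindow_shift (m t : ℕ) :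
    μ.map (noiseWindow N m fun k => Y (t + k)) = Measure.pi fun _ => ν := by
  have hinj : Function.Injective fun q : Fin m × Fin N × Fin 2 => (t + q.1, (q.2.1 : ℕ), q.2.2) :=
    fun q q' h => by
      simp only [Prod.mk.injEq, add_right_inj, Fin.val_inj] at h
      exact Prod.ext h.1 (Prod.ext h.2.1 h.2.2)
  change μ.map (fun ω (q : Fin m × Fin N × Fin 2) => Y (t + q.1) q.2.1 q.2.2 ω) = _
  rw [(iIndepFun_iff_map_fun_eq_pi_map fun q => hY _ _ _).1 (hind.precomp hinj)]
  exact congrArg Measure.pi (funext fun q => hlaw _)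

include hY hind hlaw in
theorem measure_slowStartEvent_shift (m : ℕ) (r : ℝ) (t : ℕ) :
    μ (slowStartEvent N m r fun k => Y (t + k)) = μ (slowStartEvent N m r Y) := by
  have hS : MeasurableSet (slowStartEvent N m r (extendWindow N m)) :=
    (Set.to_countable _).measurableSet
  have key : ∀ t, μ (slowStartEvent N m r fun k => Y (t + k)) =
      (Measure.pi fun _ : Fin m × Fin N × Fin 2 => ν) (slowStartEvent N m r (extendWindow N m)) :=
    fun t => by
      have hW : AEMeasurable (noiseWindow N m fun k => Y (t + k)) μ :=
        aemeasurable_pi_lambda _ fun q => hY _ _ _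
      rw [slowStartEvent_eq_preimage, ← Measure.map_apply_of_aemeasurable hW hS,
        map_noiseWindow_shift hY hind hlaw]
  simpa using (key t).trans (key 0).symm

end Stationarity

theorem tendsto_integral_div_of_ae_tendsto_div [MeasurableSpace Ω] {μ : Measure Ω}
    [IsProbabilityMeasure μ] {X : ℕ → Ω → ℝ} {v : ℝ} (hX : ∀ n, AEMeasurable (X n) μ)
    (hbd : ∀ n, ∀ᵐ ω ∂μ, |X n ω| ≤ n)
    (hlim : ∀ᵐ ω ∂μ, Tendsto (fun n : ℕ => X n ω / n) atTop (𝓝 v)) :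
    Tendsto (fun n : ℕ => (∫ ω, X n ω ∂μ) / n) atTop (𝓝 v) := by
  have hdiv : ∀ n : ℕ, ∀ᵐ ω ∂μ, ‖X n ω / n‖ ≤ 1 := fun n => by
    filter_upwards [hbd n] with ω hω
    rw [norm_div, Real.norm_eq_abs, Real.norm_natCast]
    exact div_le_one_of_le₀ hω (Nat.cast_nonneg n)
  simpa [integral_div] using tendsto_integral_of_dominated_convergence (fun _ => (1 : ℝ))
    (fun n => ((hX n).div_const _).aestronglyMeasurable) (integrable_const 1) hdiv hlim

section Expectation

variable [MeasurableSpace Ω] {μ : Measure Ω} {Y : ℕ → ℕ → Fin 2 → Ω → ℤ}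
  (hY : ∀ n i l, AEMeasurable (Y n i l) μ)

include hY in
theorem aemeasurable_maxPop_chain (n : ℕ) :
    AEMeasurable (fun ω => (maxPop (chain N Y n ω) : ℝ)) μ :=
  (measurable_of_countable fun x : Fin N → ℤ => (maxPop x : ℝ)).comp_aemeasurable
    (aemeasurable_chain hY n)

include hY in
theorem sub_le_integral_maxPop_chain [IsProbabilityMeasure μ] [NeZero N] {ν : Measure ℤ}
    (hind : iIndepFun (fun q : ℕ × ℕ × Fin 2 => Y q.1 q.2.1 q.2.2) μ)
    (hlaw : ∀ q : ℕ × ℕ × Fin 2, μ.map (Y q.1 q.2.1 q.2.2) = ν)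
    (h01 : ∀ᵐ ω ∂μ, ∀ n i l, 0 ≤ Y n i l ω ∧ Y n i l ω ≤ 1)
    {m : ℕ} {r : ℝ} (hm : 1 ≤ m) (hr : 0 ≤ r) (n : ℕ) :
    r * n - r * m - r * m * (n * μ.real (slowStartEvent N m r Y))
      ≤ ∫ ω, (maxPop (chain N Y n ω) : ℝ) ∂μ := by
  set E := fun t => slowStartEvent N m r fun k => Y (t + k)
  have hE : ∀ t, NullMeasurableSet (E t) μ := fun t => by
    simp only [E]
    rw [slowStartEvent_eq_preimage]
    exact (aemeasurable_pi_lambda _ fun q => hY _ _ _).nullMeasurableSet_preimage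
      (Set.to_countable _).measurableSet
  have hE_int : ∀ t, Integrable ((E t).indicator (1 : Ω → ℝ)) μ :=
    fun t => (integrable_const 1).indicator₀ (hE t)
  have hE_integral : ∀ t, ∫ ω, (E t).indicator 1 ω ∂μ = μ.real (slowStartEvent N m r Y) :=
    fun t => by
      rw [integral_indicator₀ (hE t), Pi.one_def, setIntegral_const, smul_eq_mul, mul_one,
        measureReal_def, measure_slowStartEvent_shift hY hind hlaw, measureReal_def]
  have hmax_int : Integrable (fun ω => (maxPop (chain N Y n ω) : ℝ)) μ :=
    Integrable.of_bound (aemeasurable_maxPop_chain hY n).aestronglyMeasurable n (by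
      filter_upwards [h01] with ω hω
      exact abs_maxPop_chain_le (fun n i l => (hω n i l).1) (fun n i l => (hω n i l).2) n)
  have hcount_int : Integrable (fun ω => ∑ t ∈ range n, (E t).indicator (1 : Ω → ℝ) ω) μ :=
    integrable_finsetSum _ fun t _ => hE_int t
  calc r * n - r * m - r * m * (n * μ.real (slowStartEvent N m r Y))
      = ∫ ω, (r * n - r * m - r * m * ∑ t ∈ range n, (E t).indicator 1 ω) ∂μ := by
        rw [integral_sub (integrable_const _) (hcount_int.const_mul _), integral_const,
          integral_const_mul, integral_finsetSum _ fun t _ => hE_int t]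
        simp [hE_integral]
    _ ≤ ∫ ω, (maxPop (chain N Y n ω) : ℝ) ∂μ := by
        refine integral_mono_ae ((integrable_const _).sub (hcount_int.const_mul _)) hmax_int ?_
        filter_upwards [h01] with ω hω
        exact (sub_le_minPop_chain hm hr (fun n i l => (hω n i l).1) n).trans
          (by exact_mod_cast minPop_le_maxPop _)

end Expectation

theorem speed_lower_bound_via_B_general
    (p : ℝ)
    (vp : ℝ)
    (α : ℝ) (hα1 : α < vp)
    (m : ℕ) (hm : 1 ≤ m)
    (Ω : Type*) [MeasureSpace Ω] [IsProbabilityMeasure (ℙ : Measure Ω)]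
    (Y : ℕ → ℕ → Fin 2 → Ω → ℤ)
    (hiid : iIndepFun
      (fun q : ℕ × ℕ × Fin 2 => Y q.1 q.2.1 q.2.2) ℙ)
    (hlaw : ∀ q : ℕ × ℕ × Fin 2, Measure.map (Y q.1 q.2.1 q.2.2) ℙ = bernoulliStep p)
    (N : ℕ) (hN : 1 ≤ N)
    (vN : ℝ)
    (hvN : ∀ᵐ ω ∂ℙ,
      Tendsto (fun n => (maxPop (chain N Y n ω) : ℝ) / n) atTop (nhds vN))
    (B : Set Ω)
    (hB : B = {ω | ∀ i : ℕ, 1 ≤ i → i ≤ m →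
      (minPop (chain N Y i ω) : ℝ) < (vp - α) * i}) :
    (vp - α) * (1 - m * (ℙ B).toReal) ≤ vN := by
  have : NeZero N := ⟨by omega⟩
  set r := vp - α
  rw [show B = slowStartEvent N m r Y from hB, ← measureReal_def]
  have hY : ∀ n i l, AEMeasurable (Y n i l) ℙ := fun n i l =>
    .of_map_ne_zero ((hlaw (n, i, l)).symm ▸ bernoulliStep_ne_zero p)
  have h01 : ∀ᵐ ω ∂ℙ, ∀ n i l, 0 ≤ Y n i l ω ∧ Y n i l ω ≤ 1 := by
    simp only [ae_all_iff]
    exact fun n i l => ae_of_ae_map (hY n i l) ((hlaw (n, i, l)).symm ▸ ae_bernoulliStep p)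
  have hmean := tendsto_integral_div_of_ae_tendsto_div (aemeasurable_maxPop_chain hY)
    (fun n => by
      filter_upwards [h01] with ω hω
      exact abs_maxPop_chain_le (fun n i l => (hω n i l).1) (fun n i l => (hω n i l).2) n) hvN
  set P := (ℙ : Measure Ω).real (slowStartEvent N m r Y)
  have hbound : Tendsto (fun n : ℕ => r - r * m / n - r * m * P) atTop (𝓝 (r * (1 - m * P))) := by
    convert ((tendsto_const_div_atTop_nhds_zero_nat (r * m)).const_sub r).sub_const (r * m * P)
      using 2
    ring
  refine le_of_tendsto_of_tendsto hbound hmean (eventually_atTop.2 ⟨1, fun n hn => ?_⟩)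
  have hn : (0 : ℝ) < n := by exact_mod_cast hn
  rw [le_div_iff₀ hn]
  have := sub_le_integral_maxPop_chain (N := N) hY hiid hlaw h01 hm (sub_nonneg.2 hα1.le) n
  calc (r - r * m / n - r * m * P) * n = r * n - r * m - r * m * (n * P) := by field_simp
    _ ≤ _ := this

/-- **Proposition (speed lower bound via the event `B`):** let `0 < α < v(p)`, `m ≥ 1`,
and let `B` be the event that `min X^N_i < (v(p) − α)·i` for all `1 ≤ i ≤ m`.  Then
`v_N(p) ≥ (v(p) − α)·(1 − m·P(B))`. -/
theorem speed_lower_bound_via_B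
    (p : ℝ) (hp0 : 0 < p) (hp1 : p < 1 / 2)
    (vp : ℝ) (hvp0 : 0 ≤ vp) (hvp1 : vp ≤ 1) (hvproot : rateFn p vp = Real.log 2)
    (α : ℝ) (hα0 : 0 < α) (hα1 : α < vp)
    (m : ℕ) (hm : 1 ≤ m)
    (Ω : Type*) [MeasureSpace Ω] [IsProbabilityMeasure (ℙ : Measure Ω)]
    (Y : ℕ → ℕ → Fin 2 → Ω → ℤ)
    (hiid : iIndepFun
      (fun q : ℕ × ℕ × Fin 2 => Y q.1 q.2.1 q.2.2) ℙ)
    (hlaw : ∀ q : ℕ × ℕ × Fin 2, Measure.map (Y q.1 q.2.1 q.2.2) ℙ = bernoulliStep p)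
    (N : ℕ) (hN : 1 ≤ N)
    (vN : ℝ)
    (hvN : ∀ᵐ ω ∂ℙ,
      Tendsto (fun n => (maxPop (chain N Y n ω) : ℝ) / n) atTop (nhds vN))
    (B : Set Ω)
    (hB : B = {ω | ∀ i : ℕ, 1 ≤ i → i ≤ m →
      (minPop (chain N Y i ω) : ℝ) < (vp - α) * i}) :
    (vp - α) * (1 - m * (ℙ B).toReal) ≤ vN :=
  speed_lower_bound_via_B_general p vp α hα1 m hm Ω Y hiid hlaw N hN vN hvN B hB

end
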